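/- Let K be a finite nonempty set of states, A an alphabet, δ : K → K → Language A a transition matrix, and S, H ∈ K distinguished start and halt states. Define the one-step relation Step on K × (List A) by Step (k₀, w) (k₁, w') ↔ ∃ u ∈ δ k₀ k₁, w' = w ++ u. The language accepted by the FSM is {w : List A | Relation.ReflTransGen Step (S, []) (H, w)}. Then this accepted language equals ⋃_{n ∈ ℕ} (δⁿ)[S, H], where δⁿ is the n-th matrix power of δ over the semiring of languages. -/

import Mathlib

/-!
The `(k, k')` entry of `δ ^ n` is the set of words read along runs of exactly `n` steps from `k`
to `k'`: for `n = 0` it is `{ε}` on the diagonal, and `δ ^ (n + 1) = δ ^ n * δ` appends one more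
step. Taking the union over `n` gives all runs from `S` to `H`.
-/

/-- One-step relation of an FSM with transition matrix `δ` on configurations
`(k, w) : K × List A`: a transition from `(k₀, w)` to `(k₁, w ++ u)` consumes
a word `u ∈ δ[k₀,k₁]`. -/
def fsmStep {K A : Type*} (δ : Matrix K K (Language A)) :
    K × List A → K × List A → Prop :=
  fun c c' => ∃ u ∈ δ c.1 c'.1, c'.2 = c.2 ++ u

namespace Language

variable {A : Type*}

theorem mem_sum {ι : Type*} (s : Finset ι) (f : ι → Language A) (x : List A) :
    x ∈ ∑ i ∈ s, f i ↔ ∃ i ∈ s, x ∈ f i := by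
  classical
  induction s using Finset.induction with
  | empty => simp [notMem_zero]
  | insert _ _ h ih => simp [Finset.sum_insert h, mem_add, ih]

variable {K : Type*} [Fintype K] [DecidableEq K]

theorem mem_matrix_pow_zero (δ : Matrix K K (Language A)) (k k' : K) (u : List A) :
    u ∈ (δ ^ 0) k k' ↔ k = k' ∧ u = [] := by
  by_cases h : k = k' <;> simp [h, mem_one, notMem_zero]

theorem mem_matrix_pow_succ (δ : Matrix K K (Language A)) (n : ℕ) (k k' : K) (u : List A) :
    u ∈ (δ ^ (n + 1)) k k' ↔ ∃ j, ∃ u₁ ∈ (δ ^ n) k j, ∃ u₂ ∈ δ j k', u₁ ++ u₂ = u := by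
  simp only [pow_succ, Matrix.mul_apply, mem_sum, Finset.mem_univ, true_and, mem_mul]

end Language

open Language

section

variable {K A : Type*} [Fintype K] [DecidableEq K]

theorem fsmStep_reflTransGen_of_mem_pow {δ : Matrix K K (Language A)} {n : ℕ} {k k' : K}
    {u : List A} (hu : u ∈ (δ ^ n) k k') (w : List A) :
    Relation.ReflTransGen (fsmStep δ) (k, w) (k', w ++ u) := by
  induction n generalizing k' u with
  | zero =>
    obtain ⟨rfl, rfl⟩ := (mem_matrix_pow_zero δ k k' u).mp hu
    simpa using Relation.ReflTransGen.refl
  | succ n ih =>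
    obtain ⟨j, u₁, h₁, u₂, h₂, rfl⟩ := (mem_matrix_pow_succ δ n k k' u).mp hu
    rw [← List.append_assoc]
    exact (ih h₁).tail ⟨u₂, h₂, rfl⟩

theorem exists_mem_pow_of_fsmStep_reflTransGen {δ : Matrix K K (Language A)} {k : K}
    {w : List A} {c : K × List A} (h : Relation.ReflTransGen (fsmStep δ) (k, w) c) :
    ∃ n, ∃ u ∈ (δ ^ n) k c.1, c.2 = w ++ u := by
  induction h with
  | refl => exact ⟨0, [], (mem_matrix_pow_zero δ k k []).mpr ⟨rfl, rfl⟩, by simp⟩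
  | tail _ hstep ih =>
    obtain ⟨n, u₁, h₁, hb⟩ := ih
    obtain ⟨u₂, h₂, hc⟩ := hstep
    exact ⟨n + 1, u₁ ++ u₂, (mem_matrix_pow_succ δ n _ _ _).mpr ⟨_, u₁, h₁, u₂, h₂, rfl⟩,
      by rw [hc, hb, List.append_assoc]⟩

theorem fsmStep_reflTransGen_iff (δ : Matrix K K (Language A)) (k k' : K) (w w' : List A) :
    Relation.ReflTransGen (fsmStep δ) (k, w) (k', w') ↔
      ∃ n, ∃ u ∈ (δ ^ n) k k', w' = w ++ u := by
  refine ⟨exists_mem_pow_of_fsmStep_reflTransGen, ?_⟩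
  rintro ⟨n, u, hu, rfl⟩
  exact fsmStep_reflTransGen_of_mem_pow hu w

end

theorem fsm_accepted_language_eq_union_matrix_powers_general {K A : Type*} [Fintype K]
    [DecidableEq K] (δ : Matrix K K (Language A)) (S H : K) :
    {w : List A | Relation.ReflTransGen (fsmStep δ) (S, []) (H, w)} =
      ⋃ n : ℕ, ((δ ^ n) S H : Set (List A)) := by
  ext w
  simp only [Set.mem_ofPred_eq, fsmStep_reflTransGen_iff, List.nil_append, exists_eq_right']
  exact Set.mem_iUnion.symm

theorem fsm_accepted_language_eq_union_matrix_powers {K A : Type*} [Fintype K]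
    [DecidableEq K] [Nonempty K] (δ : Matrix K K (Language A)) (S H : K) :
    {w : List A | Relation.ReflTransGen (fsmStep δ) (S, []) (H, w)} =
      ⋃ n : ℕ, ((δ ^ n) S H : Set (List A)) :=
  fsm_accepted_language_eq_union_matrix_powers_general δ S H
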